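/- Fix ε > 0, δ > 0, and an integer t ≥ 1. For a finite multiset D of points in ℝ^d, define k*_D to be the largest k ∈ {0, 1, …, t−1} such that there exists an integer g > 0 with V_{t−k−1,D} · e^{−εg/2} ≤ δ · V_{t+k+g+1,D}, and k*_D = −1 if no such k exists. Then k* has sensitivity 1 under add-remove neighboring: for every finite multiset D and every x ∈ ℝ^d, letting D' = D + {x}, we have |k*_D − k*_{D'}| ≤ 1. -/
import Mathlib


open MeasureTheory
open scoped ENNReal

/-- The one-dimensional depth of `y` in dimension `j` with respect to `D`. -/
noncomputable def depth1 {d : ℕ} (D : Multiset (Fin d → ℝ)) (j : Fin d) (y : Fin d → ℝ) : ℕ :=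
  min (Multiset.countP (fun x => x j ≤ y j) D) (Multiset.countP (fun x => y j ≤ x j) D)

/-- The approximate Tukey depth of `y` with respect to `D`: the minimum over the `d`
canonical dimensions of the one-dimensional depths. -/
noncomputable def approxTukeyDepth {d : ℕ} (D : Multiset (Fin d → ℝ)) (y : Fin d → ℝ) : ℕ :=
  sInf {n : ℕ | ∃ j : Fin d, n = depth1 D j y}

/-- `V i D`: the Lebesgue volume (in `ℝ≥0∞`, so possibly infinite for `i = 0`) of the
region of points of approximate Tukey depth at least `i` with respect to `D`. -/
noncomputable def depthVolume {d : ℕ} (i : ℕ) (D : Multiset (Fin d → ℝ)) : ℝ≥0∞ :=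
  volume {y : Fin d → ℝ | i ≤ approxTukeyDepth D y}

/-- The set of values `k ∈ {0, …, t-1}` (viewed in `ℤ`, together with the default `-1`)
such that there is an integer `g > 0` with
`V (t-k-1) D · e^{-ε g / 2} ≤ δ · V (t+k+g+1) D`.  The statistic `k*_D` is the greatest
element of this set. -/
def lowerBoundSet {d : ℕ} (ε δ : ℝ) (t : ℕ) (D : Multiset (Fin d → ℝ)) : Set ℤ :=
  {-1} ∪ ((fun k : ℕ => (k : ℤ)) '' {k : ℕ | k ≤ t - 1 ∧ ∃ g : ℕ, 0 < g ∧
    depthVolume (t - k - 1) D * ENNReal.ofReal (Real.exp (-(ε * (g : ℝ)) / 2))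
      ≤ ENNReal.ofReal δ * depthVolume (t + k + g + 1) D})

lemma depth1_le_cons {d : ℕ} (D : Multiset (Fin d → ℝ)) (x : Fin d → ℝ) (j : Fin d)
    (y : Fin d → ℝ) : depth1 D j y ≤ depth1 (x ::ₘ D) j y := by
  unfold depth1
  refine min_le_min ?_ ?_ <;>
  · rw [Multiset.countP_cons]
    exact Nat.le_add_right _ _

lemma depth1_cons_le {d : ℕ} (D : Multiset (Fin d → ℝ)) (x : Fin d → ℝ) (j : Fin d)
    (y : Fin d → ℝ) : depth1 (x ::ₘ D) j y ≤ depth1 D j y + 1 := by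
  unfold depth1
  have h1 : Multiset.countP (fun x => x j ≤ y j) (x ::ₘ D)
      ≤ Multiset.countP (fun x => x j ≤ y j) D + 1 := by
    rw [Multiset.countP_cons]; split_ifs <;> simp
  have h2 : Multiset.countP (fun x => y j ≤ x j) (x ::ₘ D)
      ≤ Multiset.countP (fun x => y j ≤ x j) D + 1 := by
    rw [Multiset.countP_cons]; split_ifs <;> simp
  exact le_trans (min_le_min h1 h2) (le_of_eq (Nat.succ_min_succ _ _))

lemma approxTukeyDepth_le_cons {d : ℕ} (D : Multiset (Fin d → ℝ)) (x y : Fin d → ℝ) :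
    approxTukeyDepth D y ≤ approxTukeyDepth (x ::ₘ D) y := by
  unfold approxTukeyDepth
  by_cases hd : Nonempty (Fin d)
  · have hne : {n : ℕ | ∃ j : Fin d, n = depth1 (x ::ₘ D) j y}.Nonempty :=
      ⟨_, hd.some, rfl⟩
    obtain ⟨j, hj⟩ := Nat.sInf_mem hne
    rw [hj]
    exact le_trans (Nat.sInf_le ⟨j, rfl⟩) (depth1_le_cons D x j y)
  · have h1 : {n : ℕ | ∃ j : Fin d, n = depth1 D j y} = ∅ := by
      rw [Set.eq_empty_iff_forall_notMem]; rintro n ⟨j, -⟩; exact hd ⟨j⟩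
    rw [h1, Nat.sInf_empty]
    exact Nat.zero_le _

lemma approxTukeyDepth_cons_le {d : ℕ} (D : Multiset (Fin d → ℝ)) (x y : Fin d → ℝ) :
    approxTukeyDepth (x ::ₘ D) y ≤ approxTukeyDepth D y + 1 := by
  unfold approxTukeyDepth
  by_cases hd : Nonempty (Fin d)
  · have hne : {n : ℕ | ∃ j : Fin d, n = depth1 D j y}.Nonempty :=
      ⟨_, hd.some, rfl⟩
    obtain ⟨j, hj⟩ := Nat.sInf_mem hne
    rw [hj]
    exact le_trans (Nat.sInf_le ⟨j, rfl⟩) (depth1_cons_le D x j y)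
  · have h1 : {n : ℕ | ∃ j : Fin d, n = depth1 (x ::ₘ D) j y} = ∅ := by
      rw [Set.eq_empty_iff_forall_notMem]; rintro n ⟨j, -⟩; exact hd ⟨j⟩
    rw [h1, Nat.sInf_empty]
    exact Nat.zero_le _

lemma depthVolume_antitone {d : ℕ} (D : Multiset (Fin d → ℝ)) {i i' : ℕ} (h : i ≤ i') :
    depthVolume i' D ≤ depthVolume i D := by
  apply measure_mono
  intro y hy
  exact le_trans h hy

lemma depthVolume_le_cons {d : ℕ} (D : Multiset (Fin d → ℝ)) (x : Fin d → ℝ) (i : ℕ) :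
    depthVolume i D ≤ depthVolume i (x ::ₘ D) := by
  apply measure_mono
  intro y hy
  exact le_trans hy (approxTukeyDepth_le_cons D x y)

lemma depthVolume_cons_le {d : ℕ} (D : Multiset (Fin d → ℝ)) (x : Fin d → ℝ) (i : ℕ) :
    depthVolume (i + 1) (x ::ₘ D) ≤ depthVolume i D := by
  apply measure_mono
  intro y hy
  have := approxTukeyDepth_cons_le D x y
  simp only [Set.mem_setOf_eq] at *
  omega

lemma shift_cons {d : ℕ} (ε δ : ℝ) (t : ℕ) (D : Multiset (Fin d → ℝ)) (x : Fin d → ℝ)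
    (k : ℕ)
    (h : k + 1 ≤ t - 1 ∧ ∃ g : ℕ, 0 < g ∧
      depthVolume (t - (k + 1) - 1) D * ENNReal.ofReal (Real.exp (-(ε * (g : ℝ)) / 2))
        ≤ ENNReal.ofReal δ * depthVolume (t + (k + 1) + g + 1) D) :
    k ≤ t - 1 ∧ ∃ g : ℕ, 0 < g ∧
      depthVolume (t - k - 1) (x ::ₘ D) * ENNReal.ofReal (Real.exp (-(ε * (g : ℝ)) / 2))
        ≤ ENNReal.ofReal δ * depthVolume (t + k + g + 1) (x ::ₘ D) := by
  obtain ⟨hk, g, hg, hle⟩ := h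
  refine ⟨by omega, g, hg, ?_⟩
  have ht : t - k - 1 = (t - (k + 1) - 1) + 1 := by omega
  calc depthVolume (t - k - 1) (x ::ₘ D) * ENNReal.ofReal (Real.exp (-(ε * (g : ℝ)) / 2))
      ≤ depthVolume (t - (k + 1) - 1) D * ENNReal.ofReal (Real.exp (-(ε * (g : ℝ)) / 2)) :=
        mul_le_mul_left (ht ▸ depthVolume_cons_le D x (t - (k + 1) - 1)) _
    _ ≤ ENNReal.ofReal δ * depthVolume (t + (k + 1) + g + 1) D := hle
    _ ≤ ENNReal.ofReal δ * depthVolume (t + k + g + 1) (x ::ₘ D) :=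
        mul_le_mul_right
          (le_trans (depthVolume_le_cons D x _)
            (depthVolume_antitone (x ::ₘ D) (by omega))) _

lemma shift_uncons {d : ℕ} (ε δ : ℝ) (t : ℕ) (D : Multiset (Fin d → ℝ)) (x : Fin d → ℝ)
    (k : ℕ)
    (h : k + 1 ≤ t - 1 ∧ ∃ g : ℕ, 0 < g ∧
      depthVolume (t - (k + 1) - 1) (x ::ₘ D) * ENNReal.ofReal (Real.exp (-(ε * (g : ℝ)) / 2))
        ≤ ENNReal.ofReal δ * depthVolume (t + (k + 1) + g + 1) (x ::ₘ D)) :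
    k ≤ t - 1 ∧ ∃ g : ℕ, 0 < g ∧
      depthVolume (t - k - 1) D * ENNReal.ofReal (Real.exp (-(ε * (g : ℝ)) / 2))
        ≤ ENNReal.ofReal δ * depthVolume (t + k + g + 1) D := by
  obtain ⟨hk, g, hg, hle⟩ := h
  refine ⟨by omega, g, hg, ?_⟩
  have ht : t + (k + 1) + g + 1 = (t + k + g + 1) + 1 := by omega
  calc depthVolume (t - k - 1) D * ENNReal.ofReal (Real.exp (-(ε * (g : ℝ)) / 2))
      ≤ depthVolume (t - (k + 1) - 1) (x ::ₘ D) * ENNReal.ofReal (Real.exp (-(ε * (g : ℝ)) / 2)) :=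
        mul_le_mul_left
          (le_trans (depthVolume_le_cons D x _)
            (depthVolume_antitone (x ::ₘ D) (by omega))) _
    _ ≤ ENNReal.ofReal δ * depthVolume (t + (k + 1) + g + 1) (x ::ₘ D) := hle
    _ ≤ ENNReal.ofReal δ * depthVolume (t + k + g + 1) D :=
        mul_le_mul_right (ht ▸ depthVolume_cons_le D x (t + k + g + 1)) _

/-- The statistic `k*` (the largest `k ∈ {0,…,t-1}` witnessing the volume inequality,
or `-1` if none exists) is 1-sensitive under add-remove neighboring. -/
theorem kStar_sensitivity {d : ℕ} (ε δ : ℝ) (hε : 0 < ε) (hδ : 0 < δ)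
    (t : ℕ) (ht : 1 ≤ t) (D : Multiset (Fin d → ℝ)) (x : Fin d → ℝ) (kD kD' : ℤ)
    (hkD : IsGreatest (lowerBoundSet ε δ t D) kD)
    (hkD' : IsGreatest (lowerBoundSet ε δ t (x ::ₘ D)) kD') :
    |kD - kD'| ≤ 1 := by
  have hneg1D : (-1 : ℤ) ∈ lowerBoundSet ε δ t D := Or.inl rfl
  have hneg1D' : (-1 : ℤ) ∈ lowerBoundSet ε δ t (x ::ₘ D) := Or.inl rfl
  have hlD : (-1 : ℤ) ≤ kD := hkD.2 hneg1D
  have hlD' : (-1 : ℤ) ≤ kD' := hkD'.2 hneg1D'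
  have h1 : kD ≤ kD' + 1 := by
    rcases hkD.1 with h | ⟨k, hk, rfl⟩
    · simp only [Set.mem_singleton_iff] at h
      omega
    · rcases Nat.eq_zero_or_pos k with rfl | hk0
      · simpa using by omega
      · obtain ⟨k', rfl⟩ : ∃ k', k = k' + 1 := ⟨k - 1, by omega⟩
        have hmem : ((k' : ℤ)) ∈ lowerBoundSet ε δ t (x ::ₘ D) :=
          Or.inr ⟨k', shift_cons ε δ t D x k' hk, rfl⟩
        have := hkD'.2 hmem
        push_cast
        omega
  have h2 : kD' ≤ kD + 1 := by
    rcases hkD'.1 with h | ⟨k, hk, rfl⟩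
    · simp only [Set.mem_singleton_iff] at h
      omega
    · rcases Nat.eq_zero_or_pos k with rfl | hk0
      · simpa using by omega
      · obtain ⟨k', rfl⟩ : ∃ k', k = k' + 1 := ⟨k - 1, by omega⟩
        have hmem : ((k' : ℤ)) ∈ lowerBoundSet ε δ t D :=
          Or.inr ⟨k', shift_uncons ε δ t D x k' hk, rfl⟩
        have := hkD.2 hmem
        push_cast
        omega
  rw [abs_le]
  omega
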